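/- In ℝ², let Ω = ((−1,1)×(−1,1)) \ ((−1,1)×{0}) and define F(x₁,x₂) = (0,1) for x₂ > 0 and F(x₁,x₂) = (0,−1) for x₂ < 0. Then F ∈ DM^∞(Ω) with div F = 0 in Ω, and for every φ ∈ C_c¹(ℝ²), ∫_Ω F·∇φ dx = −2 ∫_S φ dℋ¹ + ∫_{S₁∪S₂} φ dℋ¹, where S = (−1,1)×{0}, S₁ = (−1,1)×{1}, S₂ = (−1,1)×{−1}. Hence the normal trace ⟨F·ν, ·⟩_{∂Ω} is the measure −2ℋ¹⌞S + ℋ¹⌞(S₁∪S₂), which charges the interior crack S ⊂ Ω¹ ∩ ∂Ω. -/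

import Mathlib

open MeasureTheory Metric Filter Set Topology
open scoped ENNReal NNReal

noncomputable section

abbrev V (n : ℕ) := EuclideanSpace ℝ (Fin n)

variable {n : ℕ}

/-- The set of points of density `a` of `E`. -/
def densSet (E : Set (V n)) (a : ℝ≥0∞) : Set (V n) :=
  {x | Filter.Tendsto (fun r : ℝ => volume (E ∩ Metric.ball x r) / volume (Metric.ball x r))
      (nhdsWithin 0 (Set.Ioi 0)) (nhds a)}

/-- measure-theoretic exterior -/
def mExt (E : Set (V n)) : Set (V n) := densSet E 0
/-- measure-theoretic interior -/
def mInt (E : Set (V n)) : Set (V n) := densSet E 1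
/-- measure-theoretic boundary -/
def mBdry (E : Set (V n)) : Set (V n) := (mInt E ∪ mExt E)ᶜ

/-- divergence of a vector field -/
def divg (φ : V n → V n) (x : V n) : ℝ :=
  ∑ i, (inner ℝ (fderiv ℝ φ x (EuclideanSpace.single i 1)) (EuclideanSpace.single i 1) : ℝ)

/-- admissible test vector fields supported in `U` with sup-norm ≤ 1 -/
def TestVF (U : Set (V n)) (φ : V n → V n) : Prop :=
  ContDiff ℝ 1 φ ∧ HasCompactSupport φ ∧ tsupport φ ⊆ U ∧ ∀ x, ‖φ x‖ ≤ 1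

/-- relative perimeter of `E` in `U` (variational definition) -/
def perimIn (E U : Set (V n)) : ℝ≥0∞ :=
  ⨆ φ ∈ {φ : V n → V n | TestVF U φ}, ENNReal.ofReal (∫ x in E, divg φ x)

/-- perimeter of `E` in `ℝⁿ` -/
def perim (E : Set (V n)) : ℝ≥0∞ := perimIn E Set.univ

/-- integral of `f` against a signed measure -/
def sInt (σ : SignedMeasure (V n)) (f : V n → ℝ) : ℝ :=
  ∫ x, f x ∂σ.toJordanDecomposition.posPart - ∫ x, f x ∂σ.toJordanDecomposition.negPart

/-- integral of `f` on `A` against a signed measure -/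
def sIntOn (σ : SignedMeasure (V n)) (A : Set (V n)) (f : V n → ℝ) : ℝ :=
  ∫ x in A, f x ∂σ.toJordanDecomposition.posPart - ∫ x in A, f x ∂σ.toJordanDecomposition.negPart

/-- `σ` is the distributional divergence of `F` on the open set `U`. -/
def HasDivMeasure (F : V n → V n) (U : Set (V n)) (σ : SignedMeasure (V n)) : Prop :=
  ∀ φ : V n → ℝ, ContDiff ℝ 1 φ → HasCompactSupport φ → tsupport φ ⊆ U →
    ∫ x in U, (inner ℝ (F x) (gradient φ x) : ℝ) = - sInt σ φ

/-- `ν` is a measure-theoretic (inner) unit normal of `E` at `x` -/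
def HasMTNormal (E : Set (V n)) (x : V n) (ν : V n) : Prop :=
  ‖ν‖ = 1 ∧
  Filter.Tendsto (fun r : ℝ =>
      volume ({y | y ∈ E ∧ (0:ℝ) < inner ℝ (y - x) ν} ∩ Metric.ball x r) / volume (Metric.ball x r))
    (nhdsWithin 0 (Set.Ioi 0)) (nhds 0) ∧
  Filter.Tendsto (fun r : ℝ =>
      volume ({y | y ∉ E ∧ (inner ℝ (y - x) ν : ℝ) < 0} ∩ Metric.ball x r) / volume (Metric.ball x r))
    (nhdsWithin 0 (Set.Ioi 0)) (nhds 0)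

/-- reduced boundary (points with a measure-theoretic unit normal) -/
def redBdry (E : Set (V n)) : Set (V n) := {x | ∃ ν, HasMTNormal E x ν}

/-- the measure-theoretic inner unit normal -/
def mtNormal (E : Set (V n)) (x : V n) : V n :=
  letI := Classical.dec (x ∈ redBdry E)
  if h : x ∈ redBdry E then h.choose else 0

/-- variation of a function `u` on `U` -/
def bvVar (u : V n → ℝ) (U : Set (V n)) : ℝ≥0∞ :=
  ⨆ φ ∈ {φ : V n → V n | TestVF U φ}, ENNReal.ofReal (∫ x in U, u x * divg φ x)

/-- an open set with smooth boundary -/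
def SmoothSet (E : Set (V n)) : Prop :=
  IsOpen E ∧ ∃ f : V n → ℝ, ContDiff ℝ (⊤ : ℕ∞) f ∧ E = f ⁻¹' Set.Iio 0 ∧
    ∀ x ∈ frontier E, fderiv ℝ f x ≠ 0

/-- a standard family of symmetric mollifiers -/
def IsMollifierFamily (ρ : ℝ → V n → ℝ) : Prop :=
  ∀ ε : ℝ, 0 < ε → ContDiff ℝ (⊤ : ℕ∞) (ρ ε) ∧ (∀ x, 0 ≤ ρ ε x) ∧ (∀ x, ρ ε (-x) = ρ ε x) ∧
    tsupport (ρ ε) ⊆ Metric.closedBall 0 ε ∧ ∫ x, ρ ε x = 1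

/-- mollified indicator `χ_E * ρ` -/
def mollify (E : Set (V n)) (ρ : V n → ℝ) (x : V n) : ℝ := ∫ y in E, ρ (x - y)

/-- `lam` is the weak-star limit of the measures `(H · ∇(χ_E * ρ_ε)) dx` -/
def IsPairingMeasure (H : V n → V n) (E : Set (V n)) (ρ : ℝ → V n → ℝ)
    (lam : SignedMeasure (V n)) : Prop :=
  ∀ φ : V n → ℝ, Continuous φ → HasCompactSupport φ →
    Filter.Tendsto
      (fun ε : ℝ => ∫ x, φ x * (inner ℝ (H x) (gradient (mollify E (ρ ε)) x) : ℝ))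
      (nhdsWithin 0 (Set.Ioi 0)) (nhds (sInt lam φ))


def Dex : Set (V 2) := {x | x 0 ∈ Set.Ioo (-1 : ℝ) 1 ∧ x 1 ∈ Set.Ioo (-1 : ℝ) 1}

def Sex : Set (V 2) := {x | x 0 ∈ Set.Ioo (-1 : ℝ) 1 ∧ x 1 = 0}

def S1ex : Set (V 2) := {x | x 0 ∈ Set.Ioo (-1 : ℝ) 1 ∧ x 1 = 1}

def S2ex : Set (V 2) := {x | x 0 ∈ Set.Ioo (-1 : ℝ) 1 ∧ x 1 = -1}

def Ωex : Set (V 2) := Dex \ {x | x 1 = 0}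

def Fex (x : V 2) : V 2 :=
  if 0 < x 1 then EuclideanSpace.single 1 (1 : ℝ) else -(EuclideanSpace.single 1 (1 : ℝ))

def ψ : V 2 ≃ᵐ ℝ × ℝ := (MeasurableEquiv.toLp 2 (Fin 2 → ℝ)).symm.trans MeasurableEquiv.finTwoArrow
def pt (a b : ℝ) : V 2 := ψ.symm (a, b)
lemma pt_apply_zero (a b : ℝ) : pt a b 0 = a := by
  simp [pt, ψ, MeasurableEquiv.toLp, MeasurableEquiv.trans, MeasurableEquiv.finTwoArrow,
    MeasurableEquiv.piFinTwo, MeasurableEquiv.piCongrLeft, MeasurableEquiv.funUnique]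
  rfl
lemma pt_apply_one (a b : ℝ) : pt a b 1 = b := by
  simp [pt, ψ, MeasurableEquiv.toLp, MeasurableEquiv.trans, MeasurableEquiv.finTwoArrow,
    MeasurableEquiv.piFinTwo, MeasurableEquiv.piCongrLeft, MeasurableEquiv.funUnique]
  rfl
lemma pt_eq (x : V 2) : pt (x 0) (x 1) = x := by
  ext i; fin_cases i
  · exact pt_apply_zero _ _
  · exact pt_apply_one _ _
lemma pt_smul (a b : ℝ) : pt a b = pt a 0 + b • EuclideanSpace.single 1 (1:ℝ) := by
  ext i
  fin_cases i
  · simp [pt_apply_zero, PiLp.add_apply, PiLp.smul_apply, EuclideanSpace.single_apply]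
  · simp [pt_apply_one, PiLp.add_apply, PiLp.smul_apply, EuclideanSpace.single_apply]

lemma isomH (c : ℝ) : Isometry (fun t => pt t c) := by
  apply Isometry.of_dist_eq
  intro x y
  rw [EuclideanSpace.dist_eq, Fin.sum_univ_two]
  simp [pt_apply_zero, pt_apply_one, Real.dist_eq, Real.sqrt_sq_eq_abs]

lemma isomV (a : ℝ) : Isometry (fun b => pt a b) := by
  apply Isometry.of_dist_eq
  intro x y
  rw [EuclideanSpace.dist_eq, Fin.sum_univ_two]
  simp [pt_apply_zero, pt_apply_one, Real.dist_eq, Real.sqrt_sq_eq_abs]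

def Sc (c : ℝ) : Set (V 2) := {x | x 0 ∈ Set.Ioo (-1 : ℝ) 1 ∧ x 1 = c}

lemma image_Sc (c : ℝ) : (fun t => pt t c) '' Set.Ioo (-1:ℝ) 1 = Sc c := by
  ext x
  constructor
  · rintro ⟨t, ht, rfl⟩
    exact ⟨by simpa [pt_apply_zero] using ht, pt_apply_one _ _⟩
  · rintro ⟨h0, h1⟩
    exact ⟨x 0, h0, by simp only []; rw [← h1, pt_eq]⟩

lemma map_restrict_Sc (c : ℝ) :
    (μH[(1:ℝ)] : Measure (V 2)).restrict (Sc c)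
      = Measure.map (fun t => pt t c) (volume.restrict (Set.Ioo (-1:ℝ) 1)) := by
  have hL := isomH c
  have hemb : MeasurableEmbedding (fun t => pt t c) :=
    hL.isClosedEmbedding.isEmbedding.measurableEmbedding
      hL.isClosedEmbedding.isClosed_range.measurableSet
  ext B hB
  rw [hemb.map_apply, Measure.restrict_apply hB,
    Measure.restrict_apply (hemb.measurable hB)]
  have : B ∩ Sc c = (fun t => pt t c) '' ((fun t => pt t c) ⁻¹' B ∩ Set.Ioo (-1:ℝ) 1) := by
    rw [Set.image_preimage_inter, image_Sc]
  rw [this, hL.hausdorffMeasure_image (Or.inl one_pos.le), ← MeasureTheory.hausdorffMeasure_real]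

lemma integral_Sc (c : ℝ) (φ : V 2 → ℝ) (hφ : Continuous φ) :
    ∫ x in Sc c, φ x ∂(μH[(1:ℝ)] : Measure (V 2)) = ∫ t in Set.Ioo (-1:ℝ) 1, φ (pt t c) := by
  rw [map_restrict_Sc, integral_map ((isomH c).continuous.measurable.aemeasurable)
    hφ.aestronglyMeasurable]

lemma integrableOn_Sc (c : ℝ) (φ : V 2 → ℝ) (hφ : Continuous φ) (hc : HasCompactSupport φ) :
    IntegrableOn φ (Sc c) (μH[(1:ℝ)] : Measure (V 2)) := by
  have hL := isomH c
  have hemb : MeasurableEmbedding (fun t => pt t c) :=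
    hL.isClosedEmbedding.isEmbedding.measurableEmbedding
      hL.isClosedEmbedding.isClosed_range.measurableSet
  rw [IntegrableOn, map_restrict_Sc, hemb.integrable_map_iff]
  exact ((hφ.comp hL.continuous).integrable_of_hasCompactSupport
    (hc.comp_isClosedEmbedding hL.isClosedEmbedding)).restrict

lemma inner_Fex (φ : V 2 → ℝ) (x : V 2) :
    (inner ℝ (Fex x) (gradient φ x) : ℝ)
      = if 0 < x 1 then fderiv ℝ φ x (EuclideanSpace.single 1 (1:ℝ))
        else -(fderiv ℝ φ x (EuclideanSpace.single 1 (1:ℝ))) := by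
  unfold Fex
  split_ifs
  · rw [real_inner_comm, gradient, InnerProductSpace.toDual_symm_apply]
  · rw [inner_neg_left, real_inner_comm, gradient, InnerProductSpace.toDual_symm_apply]

lemma main_calc (φ : V 2 → ℝ) (hφ : ContDiff ℝ 1 φ) (hc : HasCompactSupport φ) :
    ∫ x in Ωex, (inner ℝ (Fex x) (gradient φ x) : ℝ)
      = ∫ a in Set.Ioo (-1:ℝ) 1, (φ (pt a 1) + φ (pt a (-1)) - 2 * φ (pt a 0)) := by
  set e : V 2 := EuclideanSpace.single 1 (1:ℝ) with he
  set D : V 2 → ℝ := fun x => fderiv ℝ φ x e with hD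
  have hφc : Continuous φ := hφ.continuous
  have hφd : Differentiable ℝ φ := hφ.differentiable one_ne_zero
  have hDcont : Continuous D :=
    (ContinuousLinearMap.apply ℝ ℝ e).continuous.comp (hφ.continuous_fderiv one_ne_zero)
  have hDsupp : HasCompactSupport D := hc.fderiv_apply ℝ e
  have hDint : Integrable D := hDcont.integrable_of_hasCompactSupport hDsupp
  have hm1 : MeasurableSet {x : V 2 | 0 < x 1} :=
    measurableSet_lt measurable_const (EuclideanSpace.proj (1 : Fin 2)).continuous.measurable
  have hfd : ∀ x, (inner ℝ (Fex x) (gradient φ x) : ℝ) = if 0 < x 1 then D x else -(D x) :=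
    fun x => inner_Fex φ x
  have hfint : Integrable (fun x => (inner ℝ (Fex x) (gradient φ x) : ℝ)) := by
    refine Integrable.mono' hDint.norm ?_ ?_
    · refine AEStronglyMeasurable.congr (f := fun x => if 0 < x 1 then D x else -(D x)) ?_ ?_
      · exact (StronglyMeasurable.ite hm1 hDcont.stronglyMeasurable
          hDcont.neg.stronglyMeasurable).aestronglyMeasurable
      · exact Filter.Eventually.of_forall fun x => (hfd x).symm
    · refine Filter.Eventually.of_forall fun x => ?_
      rw [hfd x]
      split_ifs <;> simp
  have hkey : ∀ a : ℝ, ∫ b in Set.Ioo (-1:ℝ) 1 \ {0},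
      (inner ℝ (Fex (pt a b)) (gradient φ (pt a b)) : ℝ)
      = φ (pt a 1) + φ (pt a (-1)) - 2 * φ (pt a 0) := by
    intro a
    have hV : Isometry (fun b => pt a b) := isomV a
    have hDa : Continuous fun b => D (pt a b) := hDcont.comp hV.continuous
    have hDaint : Integrable fun b => D (pt a b) :=
      hDa.integrable_of_hasCompactSupport (hDsupp.comp_isClosedEmbedding hV.isClosedEmbedding)
    have hftc : ∀ u v : ℝ, ∫ b in u..v, D (pt a b) = φ (pt a v) - φ (pt a u) := by
      intro u v
      refine intervalIntegral.integral_eq_sub_of_hasDerivAt (f := fun b => φ (pt a b)) (fun b _ => ?_) (hDa.intervalIntegrable u v)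
      have h1 : HasDerivAt (fun b : ℝ => pt a 0 + b • e) e b := by
        simpa using ((hasDerivAt_id b).smul_const e).const_add (pt a 0)
      have hfdφ : HasFDerivAt φ (fderiv ℝ φ (pt a b)) (pt a 0 + b • e) := by
        rw [he, ← pt_smul]; exact (hφd (pt a b)).hasFDerivAt
      have h2 := hfdφ.comp_hasDerivAt b h1
      have h3 : (fun b : ℝ => φ (pt a b)) = fun b => φ (pt a 0 + b • e) := by
        funext b; rw [pt_smul, ← he]
      rw [h3]
      exact h2
    have hEqpos : Set.EqOn (fun b => (inner ℝ (Fex (pt a b)) (gradient φ (pt a b)) : ℝ))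
        (fun b => D (pt a b)) (Set.Ioo (0:ℝ) 1) := by
      intro b hb
      simp only []
      rw [hfd, if_pos (by rw [pt_apply_one]; exact hb.1)]
    have hEqneg : Set.EqOn (fun b => (inner ℝ (Fex (pt a b)) (gradient φ (pt a b)) : ℝ))
        (fun b => -(D (pt a b))) (Set.Ioo (-1:ℝ) 0) := by
      intro b hb
      simp only []
      rw [hfd, if_neg (by rw [pt_apply_one]; exact not_lt.2 hb.2.le)]
    have hpos : ∫ b in Set.Ioo (0:ℝ) 1, (inner ℝ (Fex (pt a b)) (gradient φ (pt a b)) : ℝ)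
        = φ (pt a 1) - φ (pt a 0) := by
      rw [setIntegral_congr_fun measurableSet_Ioo hEqpos, ← integral_Ioc_eq_integral_Ioo,
        ← intervalIntegral.integral_of_le (by norm_num : (0:ℝ) ≤ 1), hftc]
    have hneg : ∫ b in Set.Ioo (-1:ℝ) 0, (inner ℝ (Fex (pt a b)) (gradient φ (pt a b)) : ℝ)
        = -(φ (pt a 0) - φ (pt a (-1))) := by
      rw [setIntegral_congr_fun measurableSet_Ioo hEqneg, integral_neg,
        ← integral_Ioc_eq_integral_Ioo,
        ← intervalIntegral.integral_of_le (by norm_num : (-1:ℝ) ≤ 0), hftc]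
    have hsplit : Set.Ioo (-1:ℝ) 1 \ {0} = Set.Ioo (-1) 0 ∪ Set.Ioo 0 1 := by
      ext b
      simp only [Set.mem_diff, Set.mem_Ioo, Set.mem_singleton_iff, Set.mem_union]
      constructor
      · rintro ⟨⟨h1, h2⟩, h3⟩
        rcases lt_or_gt_of_ne h3 with h | h
        · exact Or.inl ⟨h1, h⟩
        · exact Or.inr ⟨h, h2⟩
      · rintro (⟨h1, h2⟩ | ⟨h1, h2⟩)
        · exact ⟨⟨h1, h2.trans one_pos⟩, h2.ne⟩
        · exact ⟨⟨lt_trans (by norm_num) h1, h2⟩, h1.ne'⟩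
    have hdisj : Disjoint (Set.Ioo (-1:ℝ) 0) (Set.Ioo (0:ℝ) 1) := by
      refine Set.disjoint_left.2 ?_
      rintro b ⟨_, h2⟩ ⟨h3, _⟩
      exact absurd h3 (not_lt.2 h2.le)
    have hi1 : IntegrableOn (fun b => (inner ℝ (Fex (pt a b)) (gradient φ (pt a b)) : ℝ))
        (Set.Ioo (-1:ℝ) 0) := by
      exact (hDaint.neg.integrableOn).congr_fun hEqneg.symm measurableSet_Ioo
    have hi2 : IntegrableOn (fun b => (inner ℝ (Fex (pt a b)) (gradient φ (pt a b)) : ℝ))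
        (Set.Ioo (0:ℝ) 1) := by
      exact (hDaint.integrableOn).congr_fun hEqpos.symm measurableSet_Ioo
    rw [hsplit, setIntegral_union hdisj measurableSet_Ioo hi1 hi2, hpos, hneg]
    ring
  have hψ : MeasurePreserving ψ (volume : Measure (V 2)) volume :=
    (volume_preserving_finTwoArrow ℝ).comp (EuclideanSpace.volume_preserving_symm_measurableEquiv_toLp (Fin 2))
  have mp : MeasurePreserving ψ.symm (volume : Measure (ℝ × ℝ)) volume := hψ.symm ψ
  have hpre : ψ.symm ⁻¹' Ωex = (Set.Ioo (-1:ℝ) 1) ×ˢ (Set.Ioo (-1:ℝ) 1 \ {0}) := by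
    ext p
    obtain ⟨a, b⟩ := p
    simp only [Set.mem_preimage, Ωex, Dex, Set.mem_diff, Set.mem_setOf_eq, Set.mem_prod,
      Set.mem_singleton_iff]
    rw [show (ψ.symm (a,b)) = pt a b from rfl, pt_apply_zero, pt_apply_one]
    tauto
  have heq := mp.setIntegral_preimage_emb ψ.symm.measurableEmbedding
      (fun x => (inner ℝ (Fex x) (gradient φ x) : ℝ)) Ωex
  rw [← heq, hpre, Measure.volume_eq_prod]
  have hTint : IntegrableOn (fun p : ℝ × ℝ => (inner ℝ (Fex (ψ.symm p)) (gradient φ (ψ.symm p)) : ℝ))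
      ((Set.Ioo (-1:ℝ) 1) ×ˢ (Set.Ioo (-1:ℝ) 1 \ {0})) (volume.prod volume) := by
    rw [← Measure.volume_eq_prod]
    exact ((mp.integrable_comp_emb ψ.symm.measurableEmbedding).2 hfint).integrableOn
  rw [setIntegral_prod _ hTint]
  exact setIntegral_congr_fun measurableSet_Ioo fun a _ => hkey a

lemma measurableSet_Sc (c : ℝ) : MeasurableSet (Sc c) := by
  have h0 : Measurable fun x : V 2 => x 0 :=
    (EuclideanSpace.proj (0 : Fin 2)).continuous.measurable
  have h1 : Measurable fun x : V 2 => x 1 :=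
    (EuclideanSpace.proj (1 : Fin 2)).continuous.measurable
  exact (h0 measurableSet_Ioo).inter (h1 (measurableSet_singleton c))

lemma part2 (φ : V 2 → ℝ) (hφ : ContDiff ℝ 1 φ) (hc : HasCompactSupport φ) :
    ∫ x in Ωex, (inner ℝ (Fex x) (gradient φ x) : ℝ)
      = -2 * (∫ x in Sex, φ x ∂(μH[(1 : ℝ)] : Measure (V 2)))
        + ∫ x in S1ex ∪ S2ex, φ x ∂(μH[(1 : ℝ)] : Measure (V 2)) := by
  have hφc : Continuous φ := hφ.continuous
  have hcomp : ∀ c : ℝ, Integrable fun a => φ (pt a c) := fun c =>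
    (hφc.comp (isomH c).continuous).integrable_of_hasCompactSupport
      (hc.comp_isClosedEmbedding (isomH c).isClosedEmbedding)
  have hdisj : Disjoint (Sc 1) (Sc (-1)) := by
    refine Set.disjoint_left.2 ?_
    rintro x ⟨_, h1⟩ ⟨_, h2⟩
    rw [h1] at h2; norm_num at h2
  rw [main_calc φ hφ hc, show Sex = Sc 0 from rfl, show S1ex = Sc 1 from rfl,
    show S2ex = Sc (-1) from rfl,
    setIntegral_union hdisj (measurableSet_Sc _) (integrableOn_Sc _ φ hφc hc)
      (integrableOn_Sc _ φ hφc hc),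
    integral_Sc 0 φ hφc, integral_Sc 1 φ hφc,
    integral_Sc (-1) φ hφc]
  have hadd : Integrable (fun a => φ (pt a 1) + φ (pt a (-1))) := (hcomp 1).add (hcomp (-1))
  have h2m : Integrable (fun a => 2 * φ (pt a 0)) := (hcomp 0).const_mul 2
  rw [integral_sub hadd.integrableOn h2m.integrableOn,
    integral_add (hcomp 1).integrableOn (hcomp (-1)).integrableOn, MeasureTheory.integral_const_mul]
  ring

theorem crack_example :
    (∀ φ : V 2 → ℝ, ContDiff ℝ 1 φ → HasCompactSupport φ → tsupport φ ⊆ Ωex →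
      ∫ x in Ωex, (inner ℝ (Fex x) (gradient φ x) : ℝ) = 0) ∧
    (∀ φ : V 2 → ℝ, ContDiff ℝ 1 φ → HasCompactSupport φ →
      ∫ x in Ωex, (inner ℝ (Fex x) (gradient φ x) : ℝ)
        = -2 * (∫ x in Sex, φ x ∂(μH[(1 : ℝ)] : Measure (V 2)))
          + ∫ x in S1ex ∪ S2ex, φ x ∂(μH[(1 : ℝ)] : Measure (V 2))) := by
  constructor
  · intro φ h1 h2 h3
    rw [part2 φ h1 h2]
    have hz : ∀ x : V 2, x ∈ tsupport φ → x ∈ Ωex := fun x hx => h3 hx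
    have z0 : ∫ x in Sex, φ x ∂(μH[(1 : ℝ)] : Measure (V 2)) = 0 := by
      refine setIntegral_eq_zero_of_forall_eq_zero fun x hx => ?_
      refine image_eq_zero_of_notMem_tsupport fun hmem => ?_
      exact (hz x hmem).2 hx.2
    have z1 : ∫ x in S1ex ∪ S2ex, φ x ∂(μH[(1 : ℝ)] : Measure (V 2)) = 0 := by
      refine setIntegral_eq_zero_of_forall_eq_zero fun x hx => ?_
      refine image_eq_zero_of_notMem_tsupport fun hmem => ?_
      have hD := (hz x hmem).1.2
      rcases hx with hx | hx
      · rw [hx.2] at hD; exact absurd hD.2 (by norm_num)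
      · rw [hx.2] at hD; exact absurd hD.1 (by norm_num)
    rw [z0, z1]; ring
  · exact part2

end
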